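/- arXiv:1111.6056 — 3 statements merged into one kernel-verified Lean document; each statement's English description precedes it below -/
import Mathlib

section
/- Let P(x|v,e) = ∏_{i=1}^n P(x_i | v_i, x_{<i}, v_{<i}, e) be a conditional distribution of outputs given inputs (a sequential process: the output at round i depends only on inputs up to round i). Suppose each single-round conditional distribution satisfies max_{x_i} P(x_i|v_i, x_{<i}, v_{<i}, e) ≤ g(I_i) where I_i is the conditional Bell expectation of round i, and g is positive, log-concave and monotonically decreasing. Then on the set G_μ = {(x,v,e) : (1/n)∑_i I_i ≥ Ī(x,v) − μ}, we have P(x|v,e) ≤ g(Ī(x,v) − μ)^n. -/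
open Finset Real

theorem ConcaveOn.prod_le_pow_mean_of_log {ι : Type*} {S : Set ℝ} {g : ℝ → ℝ}
    (hlc : ConcaveOn ℝ S fun x => log (g x)) (hpos : ∀ x ∈ S, 0 < g x)
    (s : Finset ι) (t : ι → ℝ) (ht : ∀ i ∈ s, t i ∈ S) :
    ∏ i ∈ s, g (t i) ≤ g ((#s : ℝ)⁻¹ * ∑ i ∈ s, t i) ^ #s := by
  rcases s.eq_empty_or_nonempty with rfl | hs
  · simp
  have hcard : (0 : ℝ) < #s := by exact_mod_cast hs.card_pos
  have hmean : (#s : ℝ)⁻¹ * ∑ i ∈ s, t i ∈ S := by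
    simpa [Finset.mul_sum, smul_eq_mul] using
      hlc.1.sum_mem (w := fun _ => (#s : ℝ)⁻¹) (fun _ _ => by positivity)
        (by simp [hcard.ne']) ht
  have jensen : ∑ i ∈ s, (#s : ℝ)⁻¹ • log (g (t i)) ≤
      log (g (∑ i ∈ s, (#s : ℝ)⁻¹ • t i)) :=
    hlc.le_map_sum (fun _ _ => by positivity) (by simp [hcard.ne']) ht
  simp only [smul_eq_mul, ← Finset.mul_sum] at jensen
  rw [← log_le_log_iff (prod_pos fun i hi => hpos _ (ht i hi)) (pow_pos (hpos _ hmean) _),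
    log_prod fun i hi => (hpos _ (ht i hi)).ne', log_pow]
  rwa [inv_mul_le_iff₀ hcard] at jensen

theorem sequential_prob_le_bell_bound_general
    {Xt Vt Et : Type*}
    (n : ℕ)
    (P : (Fin n → Xt) → (Fin n → Vt) → Et → ℝ)
    (pr : Fin n → Xt → Vt → (Fin n → Xt) → (Fin n → Vt) → Et → ℝ)
    (Ii : Fin n → (Fin n → Xt) → (Fin n → Vt) → Et → ℝ)
    (g : ℝ → ℝ) (hpos : ∀ x, 0 < g x)
    (hlc : ConcaveOn ℝ Set.univ fun x => Real.log (g x)) (hmono : Antitone g)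
    (Ibar : (Fin n → Xt) → (Fin n → Vt) → ℝ) (μ0 : ℝ)
    (hchain : ∀ x v e, P x v e = ∏ i, pr i (x i) (v i) x v e)
    (hnn : ∀ i xi vi x v e, 0 ≤ pr i xi vi x v e)
    (hround : ∀ i xi x v e, pr i xi (v i) x v e ≤ g (Ii i x v e))
    (x : Fin n → Xt) (v : Fin n → Vt) (e : Et)
    (hG : (1 / n : ℝ) * ∑ i, Ii i x v e ≥ Ibar x v - μ0) :
    P x v e ≤ g (Ibar x v - μ0) ^ n := by
  have hlogconcave := hlc.prod_le_pow_mean_of_log (fun x _ => hpos x) univ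
    (fun i => Ii i x v e) (fun _ _ => Set.mem_univ _)
  rw [card_univ, Fintype.card_fin, ← one_div] at hlogconcave
  calc P x v e = ∏ i, pr i (x i) (v i) x v e := hchain x v e
    _ ≤ ∏ i, g (Ii i x v e) :=
      prod_le_prod (fun i _ => hnn i _ _ x v e) (fun i _ => hround i _ x v e)
    _ ≤ g ((1 / n : ℝ) * ∑ i, Ii i x v e) ^ n := hlogconcave
    _ ≤ g (Ibar x v - μ0) ^ n := pow_le_pow_left₀ (hpos _).le (hmono hG) n

/-- On the set `G_μ`, the sequential output probability `P(x|v,e)` is bounded by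
`g(Ī(x,v) - μ)^n`, given per-round bounds `P(x_i|·) ≤ g(I_i)` with `g` positive,
log-concave and monotonically decreasing. -/
theorem sequential_prob_le_bell_bound
    {Xt Vt Et : Type*} [Fintype Xt] [Fintype Vt] [Fintype Et]
    (n : ℕ) (hn : 0 < n)
    (P : (Fin n → Xt) → (Fin n → Vt) → Et → ℝ)
    (pr : Fin n → Xt → Vt → (Fin n → Xt) → (Fin n → Vt) → Et → ℝ)
    (Ii : Fin n → (Fin n → Xt) → (Fin n → Vt) → Et → ℝ)
    (g : ℝ → ℝ) (hpos : ∀ x, 0 < g x)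
    (hlc : ConcaveOn ℝ Set.univ fun x => Real.log (g x)) (hmono : Antitone g)
    (Ibar : (Fin n → Xt) → (Fin n → Vt) → ℝ) (μ0 : ℝ)
    (hchain : ∀ x v e, P x v e = ∏ i, pr i (x i) (v i) x v e)
    (hnn : ∀ i xi vi x v e, 0 ≤ pr i xi vi x v e)
    (hround : ∀ i xi x v e, pr i xi (v i) x v e ≤ g (Ii i x v e))
    (x : Fin n → Xt) (v : Fin n → Vt) (e : Et)
    (hG : (1 / n : ℝ) * ∑ i, Ii i x v e ≥ Ibar x v - μ0) :
    P x v e ≤ g (Ibar x v - μ0) ^ n :=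
  sequential_prob_le_bell_bound_general n P pr Ii g hpos hlc hmono Ibar μ0 hchain hnn hround x v e
    hG
end

section
/- Let Q be a probability distribution on a finite alphabet K with Q(a) > 0 for all a, let H(Q) = −∑_a Q(a) log2 Q(a), and for α > 0 let T = {x ∈ K^n : for all a ∈ K, |N(a|x) − nQ(a)| ≤ α√n·√(Q(a))}. Then |T| ≤ 2^{nH(Q) + 2(log2 e / e)|K|α√n}. -/
open Finset
open scoped Classical

lemma log_le_div_e {u : ℝ} (hu : 0 < u) : Real.log u ≤ u / Real.exp 1 := by
  have h := Real.log_le_sub_one_of_pos (x := u / Real.exp 1) (by positivity)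
  rw [Real.log_div (ne_of_gt hu) (by positivity), Real.log_exp] at h
  linarith

lemma sqrt_mul_log_ge {t : ℝ} (ht : 0 < t) :
    -2 / Real.exp 1 ≤ Real.sqrt t * Real.log t := by
  have hs : 0 < Real.sqrt t := Real.sqrt_pos.mpr ht
  have hlog : Real.log t = 2 * Real.log (Real.sqrt t) := by
    rw [Real.log_sqrt ht.le]; ring
  have h1 : Real.log (Real.sqrt t)⁻¹ ≤ (Real.sqrt t)⁻¹ / Real.exp 1 :=
    log_le_div_e (by positivity)
  rw [Real.log_inv] at h1
  have h2 : -(Real.sqrt t * Real.log (Real.sqrt t)) ≤ 1 / Real.exp 1 := by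
    have := mul_le_mul_of_nonneg_left h1 hs.le
    rw [mul_neg] at this
    calc -(Real.sqrt t * Real.log (Real.sqrt t)) ≤ Real.sqrt t * ((Real.sqrt t)⁻¹ / Real.exp 1) := this
      _ = 1 / Real.exp 1 := by field_simp
  have he : 0 < Real.exp 1 := Real.exp_pos 1
  have h3 : -(Real.sqrt t * Real.log (Real.sqrt t)) * Real.exp 1 ≤ 1 := by
    have := mul_le_mul_of_nonneg_right h2 he.le
    rwa [one_div, inv_mul_cancel₀ he.ne'] at this
  rw [hlog, div_le_iff₀ he]
  nlinarith [h3]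

/-- Cardinality bound for the typical set:
`|T| ≤ 2^{nH(Q) + 2(log₂ e / e)|K| α √n}`. -/
theorem typical_set_card_le
    {K : Type*} [Fintype K] [Nonempty K] [DecidableEq K]
    (Q : K → ℝ) (hQpos : ∀ a, 0 < Q a) (hQsum : ∑ a, Q a = 1)
    (n : ℕ) (α : ℝ) (hα : 0 < α) :
    (((Finset.univ.filter (fun x : Fin n → K => ∀ a : K,
          |((Finset.univ.filter fun i => x i = a).card : ℝ) - n * Q a|
            ≤ α * Real.sqrt n * Real.sqrt (Q a))).card : ℝ))
      ≤ (2 : ℝ) ^ ((n : ℝ) * (-∑ a, Q a * Real.logb 2 (Q a)) +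
          2 * (Real.logb 2 (Real.exp 1) / Real.exp 1) * (Fintype.card K : ℝ) * α *
            Real.sqrt n) := by
  set T := Finset.univ.filter (fun x : Fin n → K => ∀ a : K,
          |((Finset.univ.filter fun i => x i = a).card : ℝ) - n * Q a|
            ≤ α * Real.sqrt n * Real.sqrt (Q a)) with hT
  set E : ℝ := (n : ℝ) * (-∑ a, Q a * Real.logb 2 (Q a)) +
          2 * (Real.logb 2 (Real.exp 1) / Real.exp 1) * (Fintype.card K : ℝ) * α *
            Real.sqrt n with hE
  have hln2 : (0:ℝ) < Real.log 2 := Real.log_pos (by norm_num)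
  have he : (0:ℝ) < Real.exp 1 := Real.exp_pos 1
  -- key pointwise bound
  have key : ∀ x ∈ T, (2:ℝ) ^ (-E) ≤ ∏ i, Q (x i) := by
    intro x hx
    rw [hT, mem_filter] at hx
    have hxT := hx.2
    set N : K → ℕ := fun a => (Finset.univ.filter fun i => x i = a).card with hN
    have hprod : ∏ i, Q (x i) = ∏ a, Q a ^ N a := by
      rw [← Finset.prod_fiberwise univ (fun i => x i) (fun i => Q (x i))]
      refine Finset.prod_congr rfl fun a _ => ?_
      rw [Finset.prod_congr rfl (fun i hi => congrArg Q (Finset.mem_filter.mp hi).2),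
        Finset.prod_const]
    have h2 : ∀ a : K, Q a ^ N a = (2:ℝ) ^ ((N a : ℝ) * Real.logb 2 (Q a)) := by
      intro a
      rw [mul_comm, Real.rpow_mul (by norm_num : (0:ℝ) ≤ 2),
        Real.rpow_logb (by norm_num) (by norm_num) (hQpos a), Real.rpow_natCast]
    have hprod2 : ∏ i, Q (x i) = (2:ℝ) ^ (∑ a, (N a : ℝ) * Real.logb 2 (Q a)) := by
      rw [hprod, Real.rpow_sum_of_pos (by norm_num : (0:ℝ) < 2)]
      exact Finset.prod_congr rfl fun a _ => h2 a
    rw [hprod2]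
    apply Real.rpow_le_rpow_of_exponent_le (by norm_num)
    -- exponent bound: -E ≤ ∑ N a * logb 2 (Q a)
    have hterm : ∀ a : K, (n : ℝ) * Q a * Real.logb 2 (Q a)
        - 2 * (Real.logb 2 (Real.exp 1) / Real.exp 1) * α * Real.sqrt n
        ≤ (N a : ℝ) * Real.logb 2 (Q a) := by
      intro a
      have hQ1 : Q a ≤ 1 := by
        calc Q a ≤ ∑ b, Q b := Finset.single_le_sum (fun b _ => (hQpos b).le) (mem_univ a)
          _ = 1 := hQsum
      have hL : Real.logb 2 (Q a) ≤ 0 := Real.logb_nonpos (by norm_num) (hQpos a).le hQ1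
      have hNle : (N a : ℝ) ≤ (n : ℝ) * Q a + α * Real.sqrt n * Real.sqrt (Q a) := by
        have := (abs_le.mp (hxT a)).2
        linarith
      have h3 : (N a : ℝ) * Real.logb 2 (Q a)
          ≥ ((n : ℝ) * Q a + α * Real.sqrt n * Real.sqrt (Q a)) * Real.logb 2 (Q a) :=
        mul_le_mul_of_nonpos_right hNle hL
      -- bound √Q * logb 2 (Q a)
      have h4 : -(2 * (Real.logb 2 (Real.exp 1) / Real.exp 1))
          ≤ Real.sqrt (Q a) * Real.logb 2 (Q a) := by
        have h5 := sqrt_mul_log_ge (hQpos a)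
        rw [Real.logb, Real.logb, Real.log_exp]
        have h6 : (-2 / Real.exp 1) / Real.log 2
            ≤ (Real.sqrt (Q a) * Real.log (Q a)) / Real.log 2 := by gcongr
        calc -(2 * (1 / Real.log 2 / Real.exp 1)) = (-2 / Real.exp 1) / Real.log 2 := by ring
          _ ≤ (Real.sqrt (Q a) * Real.log (Q a)) / Real.log 2 := h6
          _ = Real.sqrt (Q a) * (Real.log (Q a) / Real.log 2) := by ring
      have h6 : -(2 * (Real.logb 2 (Real.exp 1) / Real.exp 1)) * (α * Real.sqrt n)
          ≤ α * Real.sqrt n * (Real.sqrt (Q a) * Real.logb 2 (Q a)) := by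
        have hαn : (0:ℝ) ≤ α * Real.sqrt n := by positivity
        calc -(2 * (Real.logb 2 (Real.exp 1) / Real.exp 1)) * (α * Real.sqrt n)
            = (α * Real.sqrt n) * -(2 * (Real.logb 2 (Real.exp 1) / Real.exp 1)) := by ring
          _ ≤ (α * Real.sqrt n) * (Real.sqrt (Q a) * Real.logb 2 (Q a)) :=
              mul_le_mul_of_nonneg_left h4 hαn
      linarith [h3, h6]
    calc -E = ∑ a : K, ((n : ℝ) * Q a * Real.logb 2 (Q a)
        - 2 * (Real.logb 2 (Real.exp 1) / Real.exp 1) * α * Real.sqrt n) := by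
          rw [hE, Finset.sum_sub_distrib, Finset.sum_const, Finset.card_univ, nsmul_eq_mul]
          simp only [mul_assoc]
          rw [← Finset.mul_sum]
          ring
      _ ≤ ∑ a, (N a : ℝ) * Real.logb 2 (Q a) := Finset.sum_le_sum fun a _ => hterm a
  -- sum bound
  have hsum1 : (T.card : ℝ) * (2:ℝ) ^ (-E) ≤ 1 := by
    calc (T.card : ℝ) * (2:ℝ) ^ (-E) = ∑ _x ∈ T, (2:ℝ) ^ (-E) := by
          rw [Finset.sum_const, nsmul_eq_mul]
      _ ≤ ∑ x ∈ T, ∏ i, Q (x i) := Finset.sum_le_sum key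
      _ ≤ ∑ x : Fin n → K, ∏ i, Q (x i) := by
          apply Finset.sum_le_sum_of_subset_of_nonneg (Finset.subset_univ T)
          intro x _ _
          exact Finset.prod_nonneg fun i _ => (hQpos (x i)).le
      _ = ∏ _i : Fin n, ∑ a, Q a := (Fintype.prod_sum (fun _ a => Q a)).symm
      _ = 1 := by rw [hQsum]; simp
  have hpos : (0:ℝ) < (2:ℝ) ^ (-E) := Real.rpow_pos_of_pos (by norm_num) _
  have : (T.card : ℝ) ≤ 1 / (2:ℝ) ^ (-E) := by
    rw [le_div_iff₀ hpos]; exact hsum1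
  calc (T.card : ℝ) ≤ 1 / (2:ℝ) ^ (-E) := this
    _ = (2:ℝ) ^ E := by rw [Real.rpow_neg (by norm_num), one_div, inv_inv]
end

section
/- Let Q be a probability distribution on a finite alphabet K with min_a Q(a) ≥ n^{−γ} for some 0 ≤ γ < 1/3, and Q^n the i.i.d. product distribution on K^n. Then for m ≥ nH(Q) + 2(log2 e/e)|K|n^{1−γ} + 2n^{1−3γ}·log2 e + O(1), there exists a function f : {0,1}^m → K^n such that the pushforward of the uniform distribution on {0,1}^m under f is ε-close in trace distance to Q^n with ε ≤ 3·exp(−2n^{1−3γ}). -/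
/-!
Measure information in nats: `H = ∑ₐ negMulLog (Q a)`, and put `B = (2/e) n^{γ/2}`,
`d = (2/e) n^{1-γ}`. From `Q a ≥ n^{-γ}` and `log x ≤ x/e`, every letter has information content
`-log Q a ∈ [0, B]`, so Hoeffding's inequality bounds the `Q^n`-mass of the sequences with
`-log Q^n(y) > nH + d` by `exp (-2d²/(nB²)) = exp (-2 n^{1-3γ})`; the remaining sequences form the
typical set `T`, which has at most `e^{nH+d}` elements.

For the sampler, round `N Q^n(y)` down (`N = 2^m`) and give the leftover mass to one sequence; any
map `{0,1}^m → K^n` with these fibre sizes has a pushforward `q` with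
`Q^n(y) - q(y) ≤ min (Q^n(y), 1/N)` at each `y`, so `q` lies within `Q^n(Tᶜ) + |T|/N` of `Q^n` in
total variation. The bit budget (with `C = 0`) makes `|T|/N ≤ exp (-2 n^{1-3γ})`.
-/

open Finset Real MeasureTheory ProbabilityTheory

section Sampling

variable {α β : Type*} [Fintype α] [Fintype β]

theorem exists_card_filter_eq [DecidableEq β] (c : β → ℕ) (hc : ∑ y, c y = Fintype.card α) :
    ∃ f : α → β, ∀ y, #{x | f x = y} = c y := by
  let e : α ≃ Σ y, Fin (c y) := Fintype.equivOfCardEq (by simp [hc])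
  refine ⟨fun x => (e x).1, fun y => ?_⟩
  calc #{x | (e x).1 = y} = #{s : Σ y, Fin (c y) | s.1 = y} := card_equiv e (by simp)
    _ = c y := by
      rw [card_filter, ← univ_sigma_univ, sum_sigma]
      simp [apply_ite Finset.card, sum_ite_eq']

theorem exists_sum_eq_and_mul_lt_add_one [Nonempty β] (N : ℕ) {p : β → ℝ}
    (hp : ∀ y, 0 ≤ p y) (hp1 : ∑ y, p y ≤ 1) :
    ∃ c : β → ℕ, ∑ y, c y = N ∧ ∀ y, N * p y < c y + 1 := by
  classical
  obtain ⟨y₀⟩ := ‹Nonempty β›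
  let k y := ⌊N * p y⌋₊
  have hk : ∑ y, k y ≤ N := by
    have : (∑ y, k y : ℝ) ≤ N := calc
      _ ≤ ∑ y, N * p y :=
        sum_le_sum fun y _ => Nat.floor_le (mul_nonneg (Nat.cast_nonneg _) (hp y))
      _ ≤ N := by rw [← mul_sum]; exact mul_le_of_le_one_right (Nat.cast_nonneg _) hp1
    exact_mod_cast this
  refine ⟨k + Pi.single y₀ (N - ∑ y, k y), ?_, fun y => ?_⟩
  · simp [sum_add_distrib, hk]
  · calc N * p y < k y + 1 := Nat.lt_floor_add_one _
      _ ≤ _ := by gcongr; exact le_add_of_nonneg_right (Nat.cast_nonneg _)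

theorem half_sum_abs_sub_eq_sum_posPart {q p : β → ℝ} (h : ∑ y, q y = ∑ y, p y) :
    1 / 2 * ∑ y, |q y - p y| = ∑ y, (p y - q y)⁺ := by
  have hbal : ∑ y, (p y - q y)⁻ = ∑ y, (p y - q y)⁺ := by
    have : ∑ y, ((p y - q y)⁺ - (p y - q y)⁻) = 0 := by
      simp_rw [posPart_sub_negPart, sum_sub_distrib, h, sub_self]
    rw [sum_sub_distrib] at this
    linarith
  simp_rw [abs_sub_comm (q _), ← posPart_add_negPart, sum_add_distrib, hbal]
  ring

theorem exists_half_sum_abs_card_div_sub_le_sum_min [DecidableEq β] [Nonempty α] [Nonempty β]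
    {p : β → ℝ} (hp : ∀ y, 0 ≤ p y) (hp1 : ∑ y, p y = 1) :
    ∃ f : α → β, 1 / 2 * ∑ y, |(#{x | f x = y} : ℝ) / Fintype.card α - p y|
      ≤ ∑ y, min (p y) (1 / Fintype.card α) := by
  obtain ⟨c, hc, hcp⟩ := exists_sum_eq_and_mul_lt_add_one (Fintype.card α) hp hp1.le
  obtain ⟨f, hf⟩ := exists_card_filter_eq (α := α) c hc
  have hN : (0 : ℝ) < Fintype.card α := by exact_mod_cast Fintype.card_pos
  refine ⟨f, ?_⟩
  simp only [hf]
  rw [half_sum_abs_sub_eq_sum_posPart]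
  · gcongr with y
    rw [posPart_def]
    refine sup_le (le_min ?_ ?_) (le_min (hp y) (by positivity))
    · linarith [div_nonneg (Nat.cast_nonneg (c y)) hN.le]
    · rw [sub_le_iff_le_add, ← add_div, le_div_iff₀ hN]
      linarith [hcp y]
  · rw [← sum_div, ← Nat.cast_sum, hc, div_self hN.ne', hp1]

theorem sum_min_le_sum_compl_add_card_mul [DecidableEq β] (p : β → ℝ) (t : ℝ) (T : Finset β) :
    ∑ y, min (p y) t ≤ ∑ y ∈ Tᶜ, p y + #T * t := by
  rw [← sum_compl_add_sum T, ← nsmul_eq_mul, ← sum_const]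
  gcongr with y _ y _
  · exact min_le_left _ _
  · exact min_le_right _ _

theorem exists_half_sum_abs_card_div_sub_le [DecidableEq β] [Nonempty α] [Nonempty β]
    {p : β → ℝ} (hp : ∀ y, 0 ≤ p y) (hp1 : ∑ y, p y = 1) (T : Finset β) :
    ∃ f : α → β, 1 / 2 * ∑ y, |(#{x | f x = y} : ℝ) / Fintype.card α - p y|
      ≤ ∑ y ∈ Tᶜ, p y + #T * (1 / Fintype.card α) := by
  obtain ⟨f, hf⟩ := exists_half_sum_abs_card_div_sub_le_sum_min (α := α) hp hp1
  exact ⟨f, hf.trans (sum_min_le_sum_compl_add_card_mul p _ T)⟩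

end Sampling

theorem log_le_div_exp_one {x : ℝ} (hx : 0 < x) : log x ≤ x / exp 1 := by
  have h := log_le_sub_one_of_pos (div_pos hx (exp_pos 1))
  rw [log_div hx.ne' (exp_ne_zero 1), log_exp] at h
  linarith

theorem neg_log_le_of_rpow_neg_le {x γ q : ℝ} (hx : 0 < x) (hq : x ^ (-γ) ≤ q) :
    -log q ≤ 2 / exp 1 * x ^ (γ / 2) := by
  have h₁ := log_le_log (rpow_pos_of_pos hx _) hq
  have h₂ := log_le_div_exp_one (rpow_pos_of_pos hx (γ / 2))
  rw [log_rpow hx] at h₁ h₂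
  have h₃ : 2 / exp 1 * x ^ (γ / 2) = 2 * (x ^ (γ / 2) / exp 1) := by ring
  linarith

theorem sq_mul_rpow_div_mul_sq_mul_rpow {x : ℝ} (hx : 0 < x) (γ : ℝ) {c : ℝ} (hc : c ≠ 0) :
    (c * x ^ (1 - γ)) ^ 2 / (x * (c * x ^ (γ / 2)) ^ 2) = x ^ (1 - 3 * γ) := by
  have h₁ : x ^ (1 - γ) = x ^ (1 - 3 * γ) * (x ^ (γ / 2)) ^ 4 := by
    rw [← rpow_natCast, ← rpow_mul hx.le, ← rpow_add hx]; ring_nf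
  have h₂ : x = x ^ (1 - 3 * γ) * (x ^ (γ / 2)) ^ 6 := by
    rw [← rpow_natCast, ← rpow_mul hx.le, ← rpow_add hx]; ring_nf; rw [rpow_one]
  have hy : 0 < x ^ (γ / 2) := rpow_pos_of_pos hx _
  have hs : 0 < x ^ (1 - 3 * γ) := rpow_pos_of_pos hx _
  rw [h₁]
  generalize x ^ (1 - 3 * γ) = s at h₂ hs ⊢
  generalize x ^ (γ / 2) = y at h₂ hy ⊢
  subst h₂
  field_simp

section ProductDistribution

variable {K : Type*} [Fintype K] {Q : K → ℝ}

theorem sum_prod_eq_one (hQ1 : ∑ a, Q a = 1) (n : ℕ) : ∑ y : Fin n → K, ∏ i, Q (y i) = 1 := by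
  classical
  rw [← Fintype.prod_sum (fun _ : Fin n => Q)]
  simp [hQ1]

/-- Hoeffding's inequality for the sum of `n` i.i.d. copies of `X`, each letter drawn from `Q`. -/
theorem sum_prod_filter_le_sum_le_exp (hQ : ∀ k, 0 ≤ Q k) (hQ1 : ∑ k, Q k = 1) {X : K → ℝ}
    {a b : ℝ} (hX : ∀ k, X k ∈ Set.Icc a b) (n : ℕ) {d : ℝ} (hd : 0 ≤ d) :
    ∑ y : Fin n → K with n * ∑ k, Q k * X k + d ≤ ∑ i, X (y i), ∏ i, Q (y i)
      ≤ exp (-2 * d ^ 2 / (n * (b - a) ^ 2)) := by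
  let _ : MeasurableSpace K := ⊤
  have : DiscreteMeasurableSpace K := ⟨fun _ => trivial⟩
  let ν : PMF K := PMF.ofFintype (fun k => ENNReal.ofReal (Q k)) (by
    rw [← ENNReal.ofReal_sum_of_nonneg (fun k _ => hQ k), hQ1, ENNReal.ofReal_one])
  have hν : ∀ k, (ν k).toReal = Q k := fun k => ENNReal.toReal_ofReal (hQ k)
  let μ := Measure.pi fun _ : Fin n => ν.toMeasure
  have hμ : ∀ y, μ.real {y} = ∏ i, Q (y i) := fun y => by
    simp only [μ, measureReal_def, Measure.pi_singleton, ENNReal.toReal_prod,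
      PMF.toMeasure_apply_singleton _ _ (measurableSet_singleton _), hν]
  set E := ∑ k, Q k * X k
  have hmean : ∀ i, ∫ y, X (y i) ∂μ = E := fun i => by
    change ∫ y, X (y i) ∂(Measure.pi fun _ => ν.toMeasure) = E
    rw [integral_comp_eval (μ := fun _ => ν.toMeasure) (f := X)
      (measurable_of_countable _).aestronglyMeasurable, PMF.integral_eq_sum]
    simp [E, hν]
  have hind : iIndepFun (fun i y => X (y i) - E) μ :=
    iIndepFun_pi (X := fun _ k => X k - E) fun _ => (measurable_of_countable _).aemeasurable
  have hsub : ∀ i ∈ univ, HasSubgaussianMGF (fun y => X (y i) - E) ((‖b - a‖₊ / 2) ^ 2) μ :=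
    fun i _ => by
      simpa [hmean] using hasSubgaussianMGF_of_mem_Icc (μ := μ) (X := fun y => X (y i))
        (measurable_of_countable _).aemeasurable (ae_of_all _ fun y => hX (y i))
  calc _ = μ.real {y | d ≤ ∑ i, (X (y i) - E)} := by
        rw [← coe_filter_univ, ← sum_measureReal_singleton]
        simp only [hμ, sum_sub_distrib, sum_const, card_univ, Fintype.card_fin, nsmul_eq_mul,
          le_sub_iff_add_le']
    _ ≤ _ := HasSubgaussianMGF.measure_sum_ge_le_of_iIndepFun hind hsub hd
    _ = _ := by
        simp only [sum_const, card_univ, Fintype.card_fin, nsmul_eq_mul, NNReal.coe_mul,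
          NNReal.coe_natCast, NNReal.coe_pow, NNReal.coe_div, coe_nnnorm, Real.norm_eq_abs, div_pow,
          sq_abs, NNReal.coe_ofNat]
        generalize (b - a) ^ 2 = v
        ring_nf

noncomputable def typicalSet (Q : K → ℝ) (n : ℕ) (r : ℝ) : Finset (Fin n → K) :=
  {y | exp (-r) ≤ ∏ i, Q (y i)}

theorem card_typicalSet_le (hQ : ∀ a, 0 ≤ Q a) (hQ1 : ∑ a, Q a = 1) (n : ℕ) (r : ℝ) :
    (#(typicalSet Q n r) : ℝ) ≤ exp r := by
  have h : #(typicalSet Q n r) * exp (-r) ≤ 1 := calc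
    _ = ∑ _y ∈ typicalSet Q n r, exp (-r) := by rw [sum_const, nsmul_eq_mul]
    _ ≤ ∑ y ∈ typicalSet Q n r, ∏ i, Q (y i) := sum_le_sum fun y hy => (mem_filter.1 hy).2
    _ ≤ ∑ y : Fin n → K, ∏ i, Q (y i) :=
      sum_le_univ_sum_of_nonneg fun y => prod_nonneg fun i _ => hQ (y i)
    _ = 1 := sum_prod_eq_one hQ1 n
  rwa [exp_neg, ← div_eq_mul_inv, div_le_one (exp_pos r)] at h

theorem sum_compl_typicalSet_le [DecidableEq K] (hQ : ∀ a, 0 < Q a) (hQ1 : ∑ a, Q a = 1)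
    {B : ℝ} (hB : ∀ a, -log (Q a) ≤ B) (n : ℕ) {d : ℝ} (hd : 0 ≤ d) :
    ∑ y ∈ (typicalSet Q n (n * ∑ a, negMulLog (Q a) + d))ᶜ, ∏ i, Q (y i)
      ≤ exp (-2 * d ^ 2 / (n * B ^ 2)) := by
  have hQ_le_one : ∀ a, Q a ≤ 1 := fun a => hQ1 ▸ single_le_sum (fun b _ => (hQ b).le) (mem_univ a)
  have hH : ∑ a, negMulLog (Q a) = ∑ a, Q a * -log (Q a) := by simp [negMulLog]
  calc _ ≤ ∑ y : Fin n → K with n * ∑ a, Q a * -log (Q a) + d ≤ ∑ i, -log (Q (y i)),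
          ∏ i, Q (y i) := by
        refine sum_le_sum_of_subset_of_nonneg (fun y hy => ?_)
          fun y _ _ => prod_nonneg fun i _ => (hQ _).le
        simp only [typicalSet, compl_filter, mem_filter, mem_univ, true_and, not_le] at hy ⊢
        have hlog := log_lt_log (prod_pos fun i _ => hQ (y i)) hy
        rw [log_prod fun i _ => (hQ (y i)).ne', log_exp, hH] at hlog
        rw [sum_neg_distrib]
        linarith
    _ ≤ exp (-2 * d ^ 2 / (n * (B - 0) ^ 2)) :=
        sum_prod_filter_le_sum_le_exp (fun a => (hQ a).le) hQ1
          (fun a => ⟨neg_nonneg.2 (log_nonpos (hQ a).le (hQ_le_one a)), hB a⟩) n hd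
    _ = _ := by rw [sub_zero]

theorem sum_compl_typicalSet_le_exp_rpow [DecidableEq K] (hQ : ∀ a, 0 < Q a)
    (hQ1 : ∑ a, Q a = 1) {n : ℕ} (hn : 0 < n) {γ : ℝ} (hQmin : ∀ a, (n : ℝ) ^ (-γ) ≤ Q a) :
    ∑ y ∈ (typicalSet Q n (n * ∑ a, negMulLog (Q a) + 2 / exp 1 * (n : ℝ) ^ (1 - γ)))ᶜ,
      ∏ i, Q (y i) ≤ exp (-2 * (n : ℝ) ^ (1 - 3 * γ)) := by
  have hn₀ : (0 : ℝ) < n := by exact_mod_cast hn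
  have h := sum_compl_typicalSet_le hQ hQ1 (fun a => neg_log_le_of_rpow_neg_le hn₀ (hQmin a)) n
    (d := 2 / exp 1 * (n : ℝ) ^ (1 - γ)) (by positivity)
  rwa [mul_div_assoc, sq_mul_rpow_div_mul_sq_mul_rpow hn₀ γ (by positivity)] at h

theorem neg_sum_mul_logb_two (Q : K → ℝ) :
    -∑ a, Q a * logb 2 (Q a) = (∑ a, negMulLog (Q a)) / log 2 := by
  simp only [logb, negMulLog, sum_div, ← sum_neg_distrib]
  congr 1; ext a; ring

end ProductDistribution

theorem sample_iid_from_uniform_general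
    {K : Type*} [Fintype K] [Nonempty K] [DecidableEq K]
    (γ : ℝ) :
    ∃ C : ℝ, ∀ (n : ℕ), 1 ≤ n → ∀ Q : K → ℝ,
      (∀ a, 0 < Q a) → (∑ a, Q a = 1) →
      (∀ a, (n : ℝ) ^ (-γ) ≤ Q a) →
      ∀ m : ℕ,
        (n : ℝ) * (-∑ a, Q a * Real.logb 2 (Q a)) +
            2 * (Real.logb 2 (Real.exp 1) / Real.exp 1) * (Fintype.card K : ℝ) *
              (n : ℝ) ^ ((1 : ℝ) - γ) +
            2 * (n : ℝ) ^ ((1 : ℝ) - 3 * γ) * Real.logb 2 (Real.exp 1) + C ≤ (m : ℝ) →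
        ∃ f : (Fin m → Bool) → (Fin n → K),
          (1 / 2) * ∑ y : Fin n → K,
              |(((Finset.univ.filter fun x => f x = y).card : ℝ) / 2 ^ m) - ∏ i, Q (y i)|
            ≤ 3 * Real.exp (-2 * (n : ℝ) ^ ((1 : ℝ) - 3 * γ)) := by
  refine ⟨0, fun n hn Q hQ hQ1 hQmin m hm => ?_⟩
  set s := (n : ℝ) ^ ((1 : ℝ) - 3 * γ)
  set H := ∑ a, negMulLog (Q a)
  set d := 2 / exp 1 * (n : ℝ) ^ ((1 : ℝ) - γ)
  set T := typicalSet Q n (n * H + d)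
  have htail : ∑ y ∈ Tᶜ, ∏ i, Q (y i) ≤ exp (-2 * s) :=
    sum_compl_typicalSet_le_exp_rpow hQ hQ1 hn hQmin
  have hbits : n * H + d + 2 * s ≤ m * log 2 := by
    have hK : d ≤ d * Fintype.card K := le_mul_of_one_le_right (by positivity)
      (by exact_mod_cast Fintype.card_pos)
    rw [neg_sum_mul_logb_two, logb, log_exp] at hm
    rw [← div_le_iff₀ (log_pos one_lt_two)]
    calc _ ≤ (n * H + d * Fintype.card K + 2 * s) / log 2 := by gcongr
      _ = _ := by ring
      _ ≤ m := hm
  have hcard : #T * (1 / 2 ^ m : ℝ) ≤ exp (-2 * s) := by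
    rw [mul_one_div, div_le_iff₀ (by positivity)]
    calc (#T : ℝ) ≤ exp (n * H + d) := card_typicalSet_le (fun a => (hQ a).le) hQ1 n _
      _ ≤ exp (-2 * s + m * log 2) := exp_le_exp.2 (by linarith)
      _ = exp (-2 * s) * 2 ^ m := by rw [exp_add, exp_nat_mul, exp_log two_pos]
  obtain ⟨f, hf⟩ := exists_half_sum_abs_card_div_sub_le (α := Fin m → Bool)
    (fun y : Fin n → K => prod_nonneg fun i _ => (hQ (y i)).le) (sum_prod_eq_one hQ1 n) T
  simp only [Fintype.card_fun, Fintype.card_bool, Fintype.card_fin, Nat.cast_pow,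
    Nat.cast_ofNat] at hf
  exact ⟨f, by linarith [exp_pos (-2 * s)]⟩

/-- Sampling an i.i.d. non-uniform distribution `Q^n` from
`m ≈ nH(Q) + O(n^{1-γ})` uniform bits, with error at most `3 exp(-2 n^{1-3γ})`,
provided `minₐ Q(a) ≥ n^{-γ}` with `0 ≤ γ < 1/3`. -/
theorem sample_iid_from_uniform
    {K : Type*} [Fintype K] [Nonempty K] [DecidableEq K]
    (γ : ℝ) (hγ0 : 0 ≤ γ) (hγ1 : γ < 1 / 3) :
    ∃ C : ℝ, ∀ (n : ℕ), 1 ≤ n → ∀ Q : K → ℝ,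
      (∀ a, 0 < Q a) → (∑ a, Q a = 1) →
      (∀ a, (n : ℝ) ^ (-γ) ≤ Q a) →
      ∀ m : ℕ,
        (n : ℝ) * (-∑ a, Q a * Real.logb 2 (Q a)) +
            2 * (Real.logb 2 (Real.exp 1) / Real.exp 1) * (Fintype.card K : ℝ) *
              (n : ℝ) ^ ((1 : ℝ) - γ) +
            2 * (n : ℝ) ^ ((1 : ℝ) - 3 * γ) * Real.logb 2 (Real.exp 1) + C ≤ (m : ℝ) →
        ∃ f : (Fin m → Bool) → (Fin n → K),
          (1 / 2) * ∑ y : Fin n → K,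
              |(((Finset.univ.filter fun x => f x = y).card : ℝ) / 2 ^ m) - ∏ i, Q (y i)|
            ≤ 3 * Real.exp (-2 * (n : ℝ) ^ ((1 : ℝ) - 3 * γ)) :=
  sample_iid_from_uniform_general γ
end
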